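/- arXiv:1009.5356 — 9 statements merged into one kernel-verified Lean document; each statement's English description precedes it below -/
import Mathlib

section
/- Let λ > 1 be a real number. Then the set H = {q·λ^p·(1 - λ^p) : p, q ∈ ℤ} is dense in ℝ. -/
theorem stmt_0 (l : ℝ) (hl : 1 < l) :
    Dense {x : ℝ | ∃ p q : ℤ, x = (q : ℝ) * l ^ p * (1 - l ^ p)} := by
  rw [Metric.dense_iff]
  intro x ε hε
  have hl0 : (0:ℝ) < l := lt_trans one_pos hl
  have hinv0 : 0 < l⁻¹ := inv_pos.mpr hl0
  have hinv : l⁻¹ < 1 := by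
    rw [inv_lt_one_iff₀]; right; exact hl
  obtain ⟨n, hn⟩ := exists_pow_lt_of_lt_one hε hinv
  set t : ℝ := l⁻¹ ^ (n+1) with ht
  have ht0 : 0 < t := pow_pos hinv0 _
  have ht1 : t < 1 := pow_lt_one₀ hinv0.le hinv (Nat.succ_ne_zero n)
  have htε : t < ε :=
    lt_of_le_of_lt (pow_le_pow_of_le_one hinv0.le hinv.le (Nat.le_succ n)) hn
  set a : ℝ := t * (1 - t) with ha
  have ha0 : 0 < a := mul_pos ht0 (by linarith)
  have haε : a < ε := by nlinarith
  have hpow : l ^ (-((n:ℤ)+1)) = t := by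
    rw [ht, ← zpow_natCast l⁻¹ (n+1), inv_zpow, ← zpow_neg]
    norm_num
  refine ⟨(⌊x / a⌋ : ℝ) * l ^ (-((n:ℤ)+1)) * (1 - l ^ (-((n:ℤ)+1))), ?_,
    ⟨-((n:ℤ)+1), ⌊x / a⌋, rfl⟩⟩
  rw [hpow, Metric.mem_ball, Real.dist_eq]
  have h1 : (⌊x / a⌋ : ℝ) ≤ x / a := Int.floor_le _
  have h2 : x / a < ⌊x / a⌋ + 1 := Int.lt_floor_add_one _
  have h1' : (⌊x / a⌋ : ℝ) * a ≤ x := by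
    rw [← le_div_iff₀ ha0]; exact h1
  have h2' : x < (⌊x / a⌋ : ℝ) * a + a := by
    have := (div_lt_iff₀ ha0).mp h2
    linarith [this]
  have key : (⌊x / a⌋ : ℝ) * t * (1 - t) = (⌊x / a⌋ : ℝ) * a := by rw [ha]; ring
  rw [abs_lt, key]
  constructor <;> linarith
end

section
/- Let λ > 1, a ∈ ℝⁿ \ {0}, f(x) = λ(x - a) + a, and h(x) = λx, and let G be the group generated by f and h. Then for every p, q ∈ ℤ, the point q·λ^p·(1 - λ^p)·a + a belongs to the orbit G(a), and the orbit G(a) is contained in the line ℝa. -/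
/-!
Both generators are homotheties of ratio `λ`, so `f ^ p` and `h ^ p` are the homotheties of
ratio `λ ^ p` about `a` and `0`; the product `h ^ p * f ^ p * h ^ (-2p)` has total ratio `1` and
is therefore the translation by `λ ^ p (1 - λ ^ p) a`, whose `q`-th power moves `a` to the stated
point. Conversely, a homothety with nonzero ratio about a point of the line `ℝ a` maps that line
onto itself, so the whole group stabilises it.
-/

open MulAction Subgroup Equiv.Perm
open scoped Pointwise

def AffineEquiv.toPermHom (k P : Type*) {V : Type*} [Ring k] [AddCommGroup V] [Module k V]
    [AddTorsor V P] : (P ≃ᵃ[k] P) →* Equiv.Perm P where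
  toFun e := e.toEquiv
  map_one' := rfl
  map_mul' _ _ := rfl

@[simp]
theorem AffineEquiv.coe_toPermHom {k P V : Type*} [Ring k] [AddCommGroup V] [Module k V]
    [AddTorsor V P] (e : P ≃ᵃ[k] P) : ⇑(AffineEquiv.toPermHom k P e) = e :=
  rfl

namespace Equiv.Perm

variable {K V : Type*} [Field K] [AddCommGroup V] [Module K V] {g : Perm V}

theorem zpow_apply_of_forall_eq_homothety {b : V} {c : K} (hc : c ≠ 0)
    (hg : ∀ x, g x = c • (x - b) + b) (p : ℤ) (x : V) : (g ^ p) x = c ^ p • (x - b) + b := by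
  have hg' :
      g = AffineEquiv.toPermHom K V (AffineEquiv.homothetyUnitsMulHom b (Units.mk0 c hc)) :=
    Equiv.ext fun y => by simp [hg, AffineMap.homothety_apply]
  rw [hg', ← map_zpow, ← map_zpow]
  simp only [AffineEquiv.coe_toPermHom, AffineEquiv.coe_homothetyUnitsMulHom_apply,
    AffineMap.homothety_apply, Units.val_zpow_eq_zpow_val, Units.val_mk0, vsub_eq_sub, vadd_eq_add]

theorem zpow_apply_of_forall_eq_add {v : V} (hg : ∀ x, g x = x + v) (q : ℤ) (x : V) :
    (g ^ q) x = x + (q : K) • v := by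
  have hg' : g = AffineEquiv.toPermHom K V (AffineEquiv.constVAdd K V v) :=
    Equiv.ext fun y => by simp [hg, add_comm]
  rw [hg', ← map_zpow, ← AffineEquiv.constVAdd_zsmul]
  simp [add_comm, Int.cast_smul_eq_zsmul]

theorem mem_stabilizer_submodule_of_forall_eq_homothety {W : Submodule K V} {b : V} (hb : b ∈ W)
    {c : K} (hc : c ≠ 0) (hg : ∀ x, g x = c • (x - b) + b) :
    g ∈ stabilizer (Perm V) (W : Set V) := by
  refine mem_stabilizer_set.2 fun x => ?_
  rw [Perm.smul_def, hg, SetLike.mem_coe, SetLike.mem_coe, W.add_mem_iff_left hb,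
    W.smul_mem_iff hc, W.sub_mem_iff_left hb]

theorem zpow_mul_zpow_mul_zpow_apply_of_homothety {f h : Perm V} {a : V} {c : K} (hc : c ≠ 0)
    (hf : ∀ x, f x = c • (x - a) + a) (hh : ∀ x, h x = c • x) (p : ℤ) (x : V) :
    (h ^ p * f ^ p * h ^ (-(2 * p))) x = x + (c ^ p * (1 - c ^ p)) • a := by
  have hhp (m : ℤ) (y : V) : (h ^ m) y = c ^ m • y := by
    simpa using zpow_apply_of_forall_eq_homothety (b := 0) hc (by simpa using hh) m y
  have hratio : c ^ (-(2 * p)) = (c ^ p * c ^ p)⁻¹ := by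
    rw [zpow_neg, two_mul, zpow_add₀ hc]
  rw [mul_apply, mul_apply, hhp, zpow_apply_of_forall_eq_homothety hc hf, hhp, hratio]
  match_scalars
  · field_simp
  · ring

end Equiv.Perm

theorem stmt_6_general {n : ℕ} (l : ℝ) (hl : 1 < l) (a : Fin n → ℝ)
    (f h : Equiv.Perm (Fin n → ℝ))
    (hf : ∀ x, f x = l • (x - a) + a) (hh : ∀ x, h x = l • x)
    (G : Subgroup (Equiv.Perm (Fin n → ℝ))) (hG : G = Subgroup.closure {f, h}) :
    (∀ p q : ℤ, ((q : ℝ) * l ^ p * (1 - l ^ p)) • a + a ∈ {y | ∃ g ∈ G, g a = y}) ∧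
    {y | ∃ g ∈ G, g a = y} ⊆ {y | ∃ t : ℝ, y = t • a} := by
  subst hG
  have hl0 : l ≠ 0 := (zero_lt_one.trans hl).ne'
  have hfG : f ∈ closure {f, h} := subset_closure (by simp)
  have hhG : h ∈ closure {f, h} := subset_closure (by simp)
  refine ⟨fun p q => ?_, ?_⟩
  · refine ⟨(h ^ p * f ^ p * h ^ (-(2 * p))) ^ q,
      zpow_mem (mul_mem (mul_mem (zpow_mem hhG p) (zpow_mem hfG p)) (zpow_mem hhG _)) q, ?_⟩
    rw [zpow_apply_of_forall_eq_add (K := ℝ)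
      (zpow_mul_zpow_mul_zpow_apply_of_homothety hl0 hf hh p), smul_smul, mul_assoc, add_comm]
  · rintro _ ⟨g, hg, rfl⟩
    have hstab :
        closure {f, h} ≤ stabilizer (Equiv.Perm (Fin n → ℝ)) ((ℝ ∙ a) : Set (Fin n → ℝ)) := by
      rw [closure_le, Set.insert_subset_iff, Set.singleton_subset_iff]
      exact ⟨mem_stabilizer_submodule_of_forall_eq_homothety
          (Submodule.mem_span_singleton_self a) hl0 hf,
        mem_stabilizer_submodule_of_forall_eq_homothety (zero_mem _) hl0 (by simpa using hh)⟩
    obtain ⟨t, ht⟩ := Submodule.mem_span_singleton.1 <|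
      (mem_stabilizer_set.1 (hstab hg) a).2 (Submodule.mem_span_singleton_self a)
    exact ⟨t, ht.symm⟩

theorem stmt_6 {n : ℕ} (l : ℝ) (hl : 1 < l) (a : Fin n → ℝ) (ha : a ≠ 0)
    (f h : Equiv.Perm (Fin n → ℝ))
    (hf : ∀ x, f x = l • (x - a) + a) (hh : ∀ x, h x = l • x)
    (G : Subgroup (Equiv.Perm (Fin n → ℝ))) (hG : G = Subgroup.closure {f, h}) :
    (∀ p q : ℤ, ((q : ℝ) * l ^ p * (1 - l ^ p)) • a + a ∈ {y | ∃ g ∈ G, g a = y}) ∧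
    {y | ∃ g ∈ G, g a = y} ⊆ {y | ∃ t : ℝ, y = t • a} :=
  stmt_6_general l hl a f h hf hh G hG
end

section
/- Let λ > 1, a ∈ ℝⁿ \ {0}, f(x) = λ(x - a) + a, and h(x) = λx, and let G be the group generated by f and h. Then for every m ∈ ℤ, the translation x ↦ x + (1 - λ^m)a belongs to G. -/
namespace Equiv.Perm

variable {k V : Type*} [Field k] [AddCommGroup V] [Module k V]

def homothetyHom (a : V) : kˣ →* Perm V where
  toFun c := (AffineEquiv.homothetyUnitsMulHom a c).toEquiv
  map_one' := by ext; simp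
  map_mul' _ _ := by ext; simp

theorem homothetyHom_apply (a : V) (c : kˣ) (x : V) :
    homothetyHom a c x = (c : k) • (x - a) + a := by
  simp [homothetyHom, AffineMap.homothety_apply]

theorem zpow_apply_of_forall_apply_eq_smul_sub_add {c : k} (hc : c ≠ 0) {a : V} {f : Perm V}
    (hf : ∀ x, f x = c • (x - a) + a) (m : ℤ) (x : V) :
    (f ^ m) x = c ^ m • (x - a) + a := by
  have hf' : f = homothetyHom a (Units.mk0 c hc) := by
    ext y
    rw [hf, homothetyHom_apply, Units.val_mk0]
  rw [hf', ← map_zpow, homothetyHom_apply, Units.val_zpow_eq_zpow_val, Units.val_mk0]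

end Equiv.Perm

theorem stmt_7_general {n : ℕ} (l : ℝ) (hl : 1 < l) (a : Fin n → ℝ)
    (f h : Equiv.Perm (Fin n → ℝ))
    (hf : ∀ x, f x = l • (x - a) + a) (hh : ∀ x, h x = l • x)
    (G : Subgroup (Equiv.Perm (Fin n → ℝ))) (hG : G = Subgroup.closure {f, h}) :
    ∀ m : ℤ, ∃ g ∈ G, ∀ x, g x = x + (1 - l ^ m) • a := by
  have hl0 : l ≠ 0 := (zero_lt_one.trans hl).ne'
  have hh' : ∀ x, h x = l • (x - 0) + 0 := by simpa using hh
  intro m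
  -- The linear parts l ^ m and l ^ (-m) of the two homotheties cancel.
  refine ⟨f ^ m * h ^ (-m), ?_, fun x => ?_⟩
  · subst hG
    exact mul_mem (zpow_mem (Subgroup.subset_closure (by simp)) m)
      (zpow_mem (Subgroup.subset_closure (by simp)) (-m))
  · rw [Equiv.Perm.mul_apply, Equiv.Perm.zpow_apply_of_forall_apply_eq_smul_sub_add hl0 hh',
      Equiv.Perm.zpow_apply_of_forall_apply_eq_smul_sub_add hl0 hf, sub_zero, add_zero,
      smul_sub, smul_smul, ← zpow_add₀ hl0, add_neg_cancel, zpow_zero, one_smul,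
      sub_smul, one_smul]
    abel

theorem stmt_7 {n : ℕ} (l : ℝ) (hl : 1 < l) (a : Fin n → ℝ) (ha : a ≠ 0)
    (f h : Equiv.Perm (Fin n → ℝ))
    (hf : ∀ x, f x = l • (x - a) + a) (hh : ∀ x, h x = l • x)
    (G : Subgroup (Equiv.Perm (Fin n → ℝ))) (hG : G = Subgroup.closure {f, h}) :
    ∀ m : ℤ, ∃ g ∈ G, ∀ x, g x = x + (1 - l ^ m) • a :=
  stmt_7_general l hl a f h hf hh G hG
end

section
/- Let λ > 1 and a, b ∈ ℝⁿ with a ≠ b. Let G be the group generated by f(x) = λ(x - a) + a and g(x) = λ(x - b) + b. Then the closure of the orbit G(a) equals the affine line ℝ(b - a) + a. -/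
/-!
Every element of `G` maps the line `ab` into itself, since `f`, `g` and their inverses are
homotheties centred on it; as the line is closed, it contains the closure of the orbit.
Conversely `g f⁻¹` is the translation by `(1 - λ)(b - a)`, and conjugating a translation by `f`
divides its vector by `λ`. So the scalars `t` for which translation by `t (b - a)` lies in `G`
form an additive subgroup of `ℝ` with arbitrarily small positive elements, hence a dense one,
and the translates of `a` by these vectors are dense in the line.
-/

open Set Equiv

section Homothety

variable {k V : Type*} [Field k] [AddCommGroup V] [Module k V]

theorem Equiv.Perm.inv_apply_of_homothety {f : Perm V} {r : k} {c : V} (hr : r ≠ 0)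
    (hf : ∀ x, f x = r • (x - c) + c) (x : V) : f⁻¹ x = r⁻¹ • (x - c) + c := by
  rw [Perm.inv_eq_iff_eq, hf, add_sub_cancel_right, smul_smul, mul_inv_cancel₀ hr, one_smul,
    sub_add_cancel]

theorem AffineSubspace.mapsTo_of_homothety {s : AffineSubspace k V} {f : V → V} {r : k} {c : V}
    (hc : c ∈ s) (hf : ∀ x, f x = r • (x - c) + c) : MapsTo f s s :=
  fun x hx => (hf x).symm ▸ s.smul_vsub_vadd_mem r hx hc hc

theorem AffineSubspace.mapsTo_and_inv_mapsTo_of_homothety {s : AffineSubspace k V} {f : Perm V}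
    {r : k} {c : V} (hr : r ≠ 0) (hc : c ∈ s) (hf : ∀ x, f x = r • (x - c) + c) :
    MapsTo f s s ∧ MapsTo ⇑f⁻¹ s s :=
  ⟨mapsTo_of_homothety hc hf, mapsTo_of_homothety hc (Perm.inv_apply_of_homothety hr hf)⟩

theorem Equiv.Perm.mapsTo_of_mem_closure {α : Type*} {s : Set α} {T : Set (Perm α)}
    (hT : ∀ f ∈ T, MapsTo f s s ∧ MapsTo ⇑f⁻¹ s s) {h : Perm α}
    (hh : h ∈ Subgroup.closure T) : MapsTo h s s := by
  induction hh using Subgroup.closure_induction'' with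
  | mem f hf => exact (hT f hf).1
  | inv_mem f hf => exact (hT f hf).2
  | one => exact mapsTo_id s
  | mul f g _ _ hf hg => exact hf.comp hg

theorem Equiv.Perm.mul_inv_eq_addLeft_of_homothety {f g : Perm V} {r : k} {a b : V} (hr : r ≠ 0)
    (hf : ∀ x, f x = r • (x - a) + a) (hg : ∀ x, g x = r • (x - b) + b) :
    g * f⁻¹ = Equiv.addLeft ((1 - r) • (b - a)) := by
  ext x
  rw [Perm.mul_apply, Perm.inv_apply_of_homothety hr hf, hg, coe_addLeft]
  simp only [smul_sub, smul_add, smul_smul, mul_inv_cancel₀ hr, one_smul, sub_smul]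
  abel

theorem Equiv.Perm.inv_mul_addLeft_mul_of_homothety {f : Perm V} {r : k} {c : V} (hr : r ≠ 0)
    (hf : ∀ x, f x = r • (x - c) + c) (v : V) :
    f⁻¹ * Equiv.addLeft v * f = Equiv.addLeft (r⁻¹ • v) := by
  ext x
  rw [Perm.mul_apply, Perm.mul_apply, Perm.inv_apply_of_homothety hr hf, hf, coe_addLeft,
    coe_addLeft]
  simp only [smul_sub, smul_add, smul_smul, inv_mul_cancel₀ hr, one_smul]
  abel

end Homothety

section Translations

variable (k : Type*) {V : Type*} [Field k] [AddCommGroup V] [Module k V]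

def translationScalars (G : Subgroup (Perm V)) (d : V) : AddSubgroup k where
  carrier := {t | Equiv.addLeft (t • d) ∈ G}
  zero_mem' := by simp [G.one_mem]
  add_mem' {s t} hs ht := by
    simpa only [mem_ofPred_eq, add_smul, addLeft_add] using G.mul_mem hs ht
  neg_mem' {t} ht := by
    simpa only [mem_ofPred_eq, neg_smul, ← neg_addLeft] using G.inv_mem ht

variable {k} {G : Subgroup (Perm V)} {d : V}

theorem mem_translationScalars {t : k} :
    t ∈ translationScalars k G d ↔ Equiv.addLeft (t • d) ∈ G :=
  Iff.rfl

theorem inv_mul_mem_translationScalars {f : Perm V} {r : k} {c : V} (hr : r ≠ 0)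
    (hf : ∀ x, f x = r • (x - c) + c) (hfG : f ∈ G) {t : k}
    (ht : t ∈ translationScalars k G d) : r⁻¹ * t ∈ translationScalars k G d := by
  rw [mem_translationScalars, mul_smul, ← Perm.inv_mul_addLeft_mul_of_homothety hr hf]
  exact G.mul_mem (G.mul_mem (G.inv_mem hfG) ht) hfG

theorem inv_pow_mul_mem_translationScalars {f g : Perm V} {r : k} {a b : V} (hr : r ≠ 0)
    (hf : ∀ x, f x = r • (x - a) + a) (hg : ∀ x, g x = r • (x - b) + b) (hfG : f ∈ G)
    (hgG : g ∈ G) (m : ℕ) : r⁻¹ ^ m * (1 - r) ∈ translationScalars k G (b - a) := by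
  induction m with
  | zero =>
    rw [pow_zero, one_mul, mem_translationScalars,
      ← Perm.mul_inv_eq_addLeft_of_homothety hr hf hg]
    exact G.mul_mem hgG (G.inv_mem hfG)
  | succ m ih =>
    rw [pow_succ', mul_assoc]
    exact inv_mul_mem_translationScalars hr hf hfG ih

end Translations

section Real

variable {V : Type*} [AddCommGroup V] [Module ℝ V] {G : Subgroup (Perm V)}

theorem dense_translationScalars {f g : Perm V} {l : ℝ} {a b : V} (hl : 1 < l)
    (hf : ∀ x, f x = l • (x - a) + a) (hg : ∀ x, g x = l • (x - b) + b) (hfG : f ∈ G)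
    (hgG : g ∈ G) : Dense (translationScalars ℝ G (b - a) : Set ℝ) := by
  refine AddSubgroup.dense_of_not_isolated_zero _ fun ε hε => ?_
  have hl₁ : 0 < l - 1 := sub_pos.2 hl
  obtain ⟨m, hm⟩ := exists_pow_lt_of_lt_one (div_pos hε hl₁) (inv_lt_one_of_one_lt₀ hl)
  have hmem := inv_pow_mul_mem_translationScalars (by positivity) hf hg hfG hgG m
  refine ⟨l⁻¹ ^ m * (l - 1), by simpa only [← mul_neg, neg_sub] using neg_mem hmem,
    by positivity, ?_⟩
  rwa [← lt_div_iff₀ hl₁]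

variable [TopologicalSpace V] [IsTopologicalAddGroup V] [ContinuousSMul ℝ V]

theorem affineSpan_pair_subset_closure_orbit {a b : V}
    (hG : Dense (translationScalars ℝ G (b - a) : Set ℝ)) :
    (line[ℝ, a, b] : Set V) ⊆ closure {y | ∃ h ∈ G, h a = y} := by
  intro y hy
  obtain ⟨t, rfl⟩ := mem_affineSpan_pair_iff_exists_lineMap_eq.1 hy
  have hcont : Continuous (AffineMap.lineMap a b : ℝ → V) := by fun_prop
  have himage : AffineMap.lineMap a b '' (translationScalars ℝ G (b - a) : Set ℝ) ⊆
      {y | ∃ h ∈ G, h a = y} := by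
    rintro _ ⟨s, hs, rfl⟩
    exact ⟨_, hs, rfl⟩
  exact closure_mono himage (image_closure_subset_closure_image hcont ⟨t, hG t, rfl⟩)

end Real

theorem setOf_exists_smul_sub_add_eq_affineSpan_pair {V : Type*} [AddCommGroup V] [Module ℝ V]
    (a b : V) : {y | ∃ t : ℝ, y = t • (b - a) + a} = (line[ℝ, a, b] : Set V) := by
  ext y
  simp only [mem_ofPred_eq, SetLike.mem_coe, mem_affineSpan_pair_iff_exists_lineMap_eq,
    AffineMap.lineMap_apply, vsub_eq_sub, vadd_eq_add, eq_comm]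

theorem stmt_8_general {n : ℕ} (l : ℝ) (hl : 1 < l) (a b : Fin n → ℝ)
    (f g : Equiv.Perm (Fin n → ℝ))
    (hf : ∀ x, f x = l • (x - a) + a) (hg : ∀ x, g x = l • (x - b) + b)
    (G : Subgroup (Equiv.Perm (Fin n → ℝ))) (hG : G = Subgroup.closure {f, g}) :
    closure {y | ∃ h ∈ G, h a = y} = {y | ∃ t : ℝ, y = t • (b - a) + a} := by
  have hl₀ : l ≠ 0 := by positivity
  have hfG : f ∈ G := hG ▸ Subgroup.subset_closure (by simp)
  have hgG : g ∈ G := hG ▸ Subgroup.subset_closure (by simp)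
  rw [setOf_exists_smul_sub_add_eq_affineSpan_pair]
  refine subset_antisymm (closure_minimal ?_ (AffineSubspace.closed_of_finiteDimensional _))
    (affineSpan_pair_subset_closure_orbit (dense_translationScalars hl hf hg hfG hgG))
  have ha := left_mem_affineSpan_pair ℝ a b
  have hb := right_mem_affineSpan_pair ℝ a b
  rintro _ ⟨h, hhG, rfl⟩
  refine Perm.mapsTo_of_mem_closure ?_ (hG ▸ hhG) ha
  rintro _ (rfl | rfl)
  · exact AffineSubspace.mapsTo_and_inv_mapsTo_of_homothety hl₀ ha hf
  · exact AffineSubspace.mapsTo_and_inv_mapsTo_of_homothety hl₀ hb hg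

theorem stmt_8 {n : ℕ} (l : ℝ) (hl : 1 < l) (a b : Fin n → ℝ) (hab : a ≠ b)
    (f g : Equiv.Perm (Fin n → ℝ))
    (hf : ∀ x, f x = l • (x - a) + a) (hg : ∀ x, g x = l • (x - b) + b)
    (G : Subgroup (Equiv.Perm (Fin n → ℝ))) (hG : G = Subgroup.closure {f, g}) :
    closure {y | ∃ h ∈ G, h a = y} = {y | ∃ t : ℝ, y = t • (b - a) + a} :=
  stmt_8_general l hl a b f g hf hg G hG
end

section
/- Let λ > 1, μ ∈ ℝ \ {0, 1}, and a, b ∈ ℝⁿ with a ≠ b. Let G be the group generated by f(x) = λ(x - a) + a and g(x) = μ(x - b) + b. Then the closure of the orbit G(a) equals the affine line ℝ(b - a) + a. -/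
/-!
The commutator `g f (f g)⁻¹` is the translation by `(1 - λ)(1 - μ) (b - a)`, and conjugating
a translation by `f⁻¹` scales it by `λ⁻¹`. Hence the parameters `t` for which
`x ↦ x + t (b - a)` lies in `G` form an additive subgroup of `ℝ` with arbitrarily small nonzero
elements, which is therefore dense; applied to `a`, these translations give a dense subset of
the line. Conversely, `f`, `g` and their inverses are homotheties centred on the line, so all
of `G` preserves it.
-/

open Set

lemma Equiv.Perm.mapsTo_of_mem_closure_s9 {α : Type*} {X : Set (Equiv.Perm α)} {s : Set α}
    (hX : ∀ h ∈ X, MapsTo h s s ∧ MapsTo ⇑h⁻¹ s s) {h : Equiv.Perm α}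
    (hh : h ∈ Subgroup.closure X) : MapsTo h s s := by
  induction hh using Subgroup.closure_induction'' with
  | mem h hh => exact (hX h hh).1
  | inv_mem h hh => exact (hX h hh).2
  | one => exact mapsTo_id s
  | mul _ _ _ _ hx hy => exact hx.comp hy

lemma AddSubgroup.dense_of_forall_div_pow_mem {S : AddSubgroup ℝ} {x l : ℝ} (hx : x ≠ 0)
    (hl : 1 < l) (hS : ∀ k : ℕ, x / l ^ k ∈ S) : Dense (S : Set ℝ) := by
  refine S.dense_of_not_isolated_zero fun ε hε ↦ ?_
  obtain ⟨k, hk⟩ :=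
    exists_pow_lt_of_lt_one (div_pos hε (abs_pos.2 hx)) (inv_lt_one_of_one_lt₀ hl)
  have hlk : 0 < l ^ k := pow_pos (one_pos.trans hl) k
  refine ⟨|x / l ^ k|, ?_, abs_pos.2 (div_ne_zero hx hlk.ne'), ?_⟩
  · rcases abs_choice (x / l ^ k) with h | h <;> rw [h]
    exacts [hS k, S.neg_mem (hS k)]
  · calc |x / l ^ k| = |x| * l⁻¹ ^ k := by rw [abs_div, abs_of_pos hlk, inv_pow, div_eq_mul_inv]
      _ < |x| * (ε / |x|) := mul_lt_mul_of_pos_left hk (abs_pos.2 hx)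
      _ = ε := mul_div_cancel₀ ε (abs_ne_zero.2 hx)

lemma closure_eq_range_of_dense_preimage {X Y : Type*} [TopologicalSpace X] [TopologicalSpace Y]
    {φ : X → Y} (hφ : Continuous φ) (hclosed : IsClosed (range φ)) {O : Set Y}
    (hO : O ⊆ range φ) (hdense : Dense (φ ⁻¹' O)) : closure O = range φ :=
  (closure_minimal hO hclosed).antisymm <|
    (hφ.range_subset_closure_image_dense hdense).trans (closure_mono (image_preimage_subset φ O))

def Subgroup.translations {V : Type*} [AddGroup V] (G : Subgroup (Equiv.Perm V)) :
    AddSubgroup V where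
  carrier := {v | Equiv.addRight v ∈ G}
  zero_mem' := by simp [G.one_mem]
  add_mem' hu hv := by simpa only [mem_ofPred_eq, Equiv.addRight_add] using G.mul_mem hv hu
  neg_mem' hv := by simpa only [mem_ofPred_eq, Equiv.neg_addRight] using G.inv_mem hv

section Homothety

variable {𝕜 V : Type*} [Field 𝕜] [AddCommGroup V] [Module 𝕜 V]
variable {f : Equiv.Perm V} {a : V} {r : 𝕜}

lemma homothety_perm_inv_apply (hf : ∀ x, f x = r • (x - a) + a) (hr : r ≠ 0) (x : V) :
    f⁻¹ x = r⁻¹ • (x - a) + a := by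
  apply f.injective
  rw [Equiv.Perm.coe_inv, Equiv.apply_symm_apply, hf, add_sub_cancel_right, smul_smul,
    mul_inv_cancel₀ hr, one_smul, sub_add_cancel]

lemma homothety_perm_mapsTo (hf : ∀ x, f x = r • (x - a) + a) {s : AffineSubspace 𝕜 V}
    (ha : a ∈ s) : MapsTo f s s := fun x hx ↦
  hf x ▸ s.smul_vsub_vadd_mem r hx ha ha

lemma homothety_perm_conj_addRight (hf : ∀ x, f x = r • (x - a) + a) (v : V) :
    f * Equiv.addRight v * f⁻¹ = Equiv.addRight (r • v) := by
  ext y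
  obtain ⟨x, rfl⟩ := f.surjective y
  rw [Equiv.Perm.mul_apply, Equiv.Perm.mul_apply, Equiv.Perm.coe_inv, Equiv.symm_apply_apply,
    Equiv.coe_addRight, Equiv.coe_addRight, hf, hf]
  module

lemma homothety_perm_commutator {g : Equiv.Perm V} {b : V} {μ : 𝕜}
    (hf : ∀ x, f x = r • (x - a) + a) (hg : ∀ x, g x = μ • (x - b) + b) :
    g * f * (f * g)⁻¹ = Equiv.addRight (((1 - r) * (1 - μ)) • (b - a)) := by
  rw [mul_inv_eq_iff_eq_mul]
  ext x
  simp only [Equiv.Perm.mul_apply, Equiv.coe_addRight, hf, hg]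
  module

lemma homothety_perm_mapsTo_of_mem_closure {g : Equiv.Perm V} {b : V} {μ : 𝕜} (hr : r ≠ 0)
    (hμ : μ ≠ 0) (hf : ∀ x, f x = r • (x - a) + a) (hg : ∀ x, g x = μ • (x - b) + b)
    {s : AffineSubspace 𝕜 V} (ha : a ∈ s) (hb : b ∈ s) {h : Equiv.Perm V}
    (hh : h ∈ Subgroup.closure {f, g}) : MapsTo h s s := by
  refine Equiv.Perm.mapsTo_of_mem_closure_s9 ?_ hh
  rintro _ (rfl | rfl)
  · exact ⟨homothety_perm_mapsTo hf ha,
      homothety_perm_mapsTo (homothety_perm_inv_apply hf hr) ha⟩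
  · exact ⟨homothety_perm_mapsTo hg hb,
      homothety_perm_mapsTo (homothety_perm_inv_apply hg hμ) hb⟩

lemma Subgroup.pow_smul_mem_translations {G : Subgroup (Equiv.Perm V)} (hfG : f ∈ G)
    (hf : ∀ x, f x = r • (x - a) + a) {v : V} (hv : v ∈ G.translations) (k : ℕ) :
    r ^ k • v ∈ G.translations := by
  induction k with
  | zero => simpa using hv
  | succ k ih =>
    rw [pow_succ', mul_smul]
    show Equiv.addRight _ ∈ G
    rw [← homothety_perm_conj_addRight hf]
    exact G.mul_mem (G.mul_mem hfG ih) (G.inv_mem hfG)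

end Homothety

lemma Subgroup.dense_setOf_smul_mem_translations {V : Type*} [AddCommGroup V] [Module ℝ V]
    {G : Subgroup (Equiv.Perm V)} {f g : Equiv.Perm V} {a b : V} {l μ : ℝ}
    (hfG : f ∈ G) (hgG : g ∈ G) (hl : 1 < l) (hμ1 : μ ≠ 1)
    (hf : ∀ x, f x = l • (x - a) + a) (hg : ∀ x, g x = μ • (x - b) + b) :
    Dense {t : ℝ | t • (b - a) ∈ G.translations} := by
  have hc0 : (1 - l) * (1 - μ) ≠ 0 := mul_ne_zero (sub_ne_zero.2 hl.ne) (sub_ne_zero.2 hμ1.symm)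
  have hc : ((1 - l) * (1 - μ)) • (b - a) ∈ G.translations := by
    show Equiv.addRight _ ∈ G
    rw [← homothety_perm_commutator hf hg]
    exact G.mul_mem (G.mul_mem hgG hfG) (G.inv_mem (G.mul_mem hfG hgG))
  have hf' := homothety_perm_inv_apply hf (one_pos.trans hl).ne'
  let S := G.translations.comap (LinearMap.toSpanSingleton ℝ V (b - a)).toAddMonoidHom
  refine S.dense_of_forall_div_pow_mem hc0 hl fun k ↦ ?_
  simpa [S, smul_smul, div_eq_inv_mul] using G.pow_smul_mem_translations (G.inv_mem hfG) hf' hc k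

theorem stmt_9_general {n : ℕ} (l μ : ℝ) (hl : 1 < l) (hμ0 : μ ≠ 0) (hμ1 : μ ≠ 1)
    (a b : Fin n → ℝ)
    (f g : Equiv.Perm (Fin n → ℝ))
    (hf : ∀ x, f x = l • (x - a) + a) (hg : ∀ x, g x = μ • (x - b) + b)
    (G : Subgroup (Equiv.Perm (Fin n → ℝ))) (hG : G = Subgroup.closure {f, g}) :
    closure {y | ∃ h ∈ G, h a = y} = {y | ∃ t : ℝ, y = t • (b - a) + a} := by
  have hfG : f ∈ G := hG ▸ Subgroup.subset_closure (by simp)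
  have hgG : g ∈ G := hG ▸ Subgroup.subset_closure (by simp)
  have hline : range (AffineMap.lineMap a b : ℝ → _) = line[ℝ, a, b] := by
    ext; exact mem_affineSpan_pair_iff_exists_lineMap_eq.symm
  have htarget :
      {y | ∃ t : ℝ, y = t • (b - a) + a} = range (AffineMap.lineMap a b : ℝ → _) := by
    ext; simp [AffineMap.lineMap_apply_module', eq_comm]
  rw [htarget]
  refine closure_eq_range_of_dense_preimage AffineMap.lineMap_continuous ?_ ?_
    ((G.dense_setOf_smul_mem_translations hfG hgG hl hμ1 hf hg).mono ?_)
  · exact hline ▸ AffineSubspace.closed_of_finiteDimensional _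
  · rintro _ ⟨h, hh, rfl⟩
    have ha := left_mem_affineSpan_pair ℝ a b
    exact hline ▸ homothety_perm_mapsTo_of_mem_closure (one_pos.trans hl).ne' hμ0 hf hg ha
      (right_mem_affineSpan_pair ℝ a b) (hG ▸ hh) ha
  · intro t ht
    exact ⟨_, ht, by simp [AffineMap.lineMap_apply_module', add_comm]⟩

theorem stmt_9 {n : ℕ} (l μ : ℝ) (hl : 1 < l) (hμ0 : μ ≠ 0) (hμ1 : μ ≠ 1)
    (a b : Fin n → ℝ) (hab : a ≠ b)
    (f g : Equiv.Perm (Fin n → ℝ))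
    (hf : ∀ x, f x = l • (x - a) + a) (hg : ∀ x, g x = μ • (x - b) + b)
    (G : Subgroup (Equiv.Perm (Fin n → ℝ))) (hG : G = Subgroup.closure {f, g}) :
    closure {y | ∃ h ∈ G, h a = y} = {y | ∃ t : ℝ, y = t • (b - a) + a} :=
  stmt_9_general l μ hl hμ0 hμ1 a b f g hf hg G hG
end

section
/- Suppose λ, μ ∈ ℝ* with λμ < 0 and log|λ| / log|μ| irrational, and let Λ be a multiplicative subgroup of ℝ* containing λ and μ. Then Λ is dense in ℝ. -/
/-!
The logarithms of the positive elements of `Λ` form an additive subgroup of `ℝ`. It contains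
`2 log |λ|` and `2 log |μ|` (the logarithms of `λ²` and `μ²`), whose ratio is irrational, so it is
dense; hence the positive elements of `Λ` are dense in `(0, ∞)`. Multiplying them by the negative
one among `λ, μ` shows that `Λ` is also dense in `(-∞, 0)`.
-/

open Set

def Subgroup.logPositive (Λ : Subgroup ℝˣ) : AddSubgroup ℝ where
  carrier := {t | ∃ u ∈ Λ, (u : ℝ) = Real.exp t}
  add_mem' := by
    rintro s t ⟨u, hu, hus⟩ ⟨v, hv, hvt⟩
    exact ⟨u * v, mul_mem hu hv, by rw [Units.val_mul, hus, hvt, Real.exp_add]⟩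
  zero_mem' := ⟨1, one_mem Λ, by simp⟩
  neg_mem' := by
    rintro t ⟨u, hu, hut⟩
    exact ⟨u⁻¹, inv_mem hu, by rw [Units.val_inv_eq_inv_val, hut, Real.exp_neg]⟩

namespace Subgroup

variable {Λ : Subgroup ℝˣ}

theorem two_mul_log_abs_mem_logPositive {u : ℝˣ} (hu : u ∈ Λ) :
    2 * Real.log |(u : ℝ)| ∈ Λ.logPositive := by
  refine ⟨u * u, mul_mem hu hu, ?_⟩
  rw [two_mul, Real.exp_add, Real.exp_log (abs_pos.mpr u.ne_zero), abs_mul_abs_self, Units.val_mul]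

theorem dense_logPositive {l μ : ℝˣ} (hl : l ∈ Λ) (hμ : μ ∈ Λ)
    (hirr : Irrational (Real.log |(l : ℝ)| / Real.log |(μ : ℝ)|)) :
    Dense (Λ.logPositive : Set ℝ) := by
  have hdense : Dense (AddSubgroup.closure
      {2 * Real.log |(l : ℝ)|, 2 * Real.log |(μ : ℝ)|} : Set ℝ) := by
    rwa [dense_addSubgroupClosure_pair_iff, mul_div_mul_left _ _ two_ne_zero]
  refine hdense.mono ((AddSubgroup.closure_le _).mpr ?_)
  exact pair_subset (two_mul_log_abs_mem_logPositive hl) (two_mul_log_abs_mem_logPositive hμ)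

end Subgroup

theorem Real.Ioi_subset_closure_exp_image {D : Set ℝ} (hD : Dense D) :
    Ioi 0 ⊆ closure (Real.exp '' D) := by
  intro y hy
  rw [← Real.exp_log hy]
  exact map_mem_closure Real.continuous_exp (hD _) (mapsTo_image _ _)

theorem Real.dense_of_Ioi_subset_closure {S : Set ℝ} (hS : Ioi 0 ⊆ closure S) {n : ℝ}
    (hn : n < 0) (hnS : MapsTo (n * ·) S S) : Dense S := by
  have hIio : Iio 0 ⊆ closure S := by
    intro x hx
    have := map_mem_closure (continuous_const_mul n) (hS (div_pos_of_neg_of_neg hx hn)) hnS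
    rwa [mul_div_cancel₀ _ hn.ne] at this
  refine dense_closure.mp ((dense_compl_singleton (0 : ℝ)).mono fun x hx => ?_)
  rcases Ne.lt_or_gt hx with hx | hx
  exacts [hIio hx, hS hx]

theorem stmt_11_general (Λ : Subgroup ℝˣ) (l μ : ℝˣ) (hl : l ∈ Λ) (hμ : μ ∈ Λ)
    (hneg : (l : ℝ) * (μ : ℝ) < 0)
    (hirr : Irrational (Real.log |(l : ℝ)| / Real.log |(μ : ℝ)|)) :
    Dense {x : ℝ | ∃ u ∈ Λ, (u : ℝ) = x} := by
  obtain ⟨n, hn, hn0⟩ : ∃ n ∈ Λ, (n : ℝ) < 0 := by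
    rcases mul_neg_iff.mp hneg with ⟨-, h⟩ | ⟨h, -⟩
    exacts [⟨μ, hμ, h⟩, ⟨l, hl, h⟩]
  have hexp : Real.exp '' Λ.logPositive ⊆ {x : ℝ | ∃ u ∈ Λ, (u : ℝ) = x} := by
    rintro _ ⟨t, ⟨u, hu, hut⟩, rfl⟩
    exact ⟨u, hu, hut⟩
  refine Real.dense_of_Ioi_subset_closure ?_ hn0 ?_
  · exact (Real.Ioi_subset_closure_exp_image (Subgroup.dense_logPositive hl hμ hirr)).trans
      (closure_mono hexp)
  · rintro _ ⟨u, hu, rfl⟩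
    exact ⟨n * u, mul_mem hn hu, Units.val_mul n u⟩

theorem stmt_11 (Λ : Subgroup ℝˣ) (l μ : ℝˣ) (hl : l ∈ Λ) (hμ : μ ∈ Λ)
    (hneg : (l : ℝ) * (μ : ℝ) < 0)
    (hl1 : |(l : ℝ)| ≠ 1) (hμ1 : |(μ : ℝ)| ≠ 1)
    (hirr : Irrational (Real.log |(l : ℝ)| / Real.log |(μ : ℝ)|)) :
    Dense {x : ℝ | ∃ u ∈ Λ, (u : ℝ) = x} :=
  stmt_11_general Λ l μ hl hμ hneg hirr
end

section
/- Let G be a non-abelian group of affine symmetries of ℝⁿ (maps x ↦ εx + a with ε ∈ {±1}), let G₁ = G ∩ (translations), and let a ∈ δ_G where δ_G = {f(0) : f ∈ G \ G₁}. Then for every x ∈ ℝⁿ, the closure of the orbit G(x) equals (x + closure(G₁(0))) ∪ (−x + a + closure(G₁(0))). -/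
theorem stmt_14 {n : ℕ} (G : Subgroup (Equiv.Perm (Fin n → ℝ)))
    (hG : ∀ f ∈ G, ∃ ε : ℝ, (ε = 1 ∨ ε = -1) ∧ ∃ a : Fin n → ℝ, ∀ x, f x = ε • x + a)
    (hna : ∃ f ∈ G, ∃ g ∈ G, f * g ≠ g * f)
    (a : Fin n → ℝ) (ha : a ∈ {v : Fin n → ℝ | ∃ f ∈ G, ∀ x, f x = -x + v}) :
    ∀ x : Fin n → ℝ,
      closure {y | ∃ g ∈ G, g x = y} =
        {z | ∃ v ∈ closure {v : Fin n → ℝ | ∃ g ∈ G, ∀ y, g y = y + v}, z = x + v} ∪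
        {z | ∃ v ∈ closure {v : Fin n → ℝ | ∃ g ∈ G, ∀ y, g y = y + v}, z = -x + a + v} := by
  obtain ⟨f, hfG, hf⟩ := ha
  intro x
  set T : Set (Fin n → ℝ) := {v | ∃ g ∈ G, ∀ y, g y = y + v} with hT
  have horb : {y | ∃ g ∈ G, g x = y} =
      ((x + ·) '' T) ∪ ((-x + a + ·) '' T) := by
    ext z
    constructor
    · rintro ⟨g, hgG, rfl⟩
      obtain ⟨ε, hε, b, hb⟩ := hG g hgG
      rcases hε with rfl | rfl
      · exact Or.inl ⟨b, ⟨g, hgG, fun y => by simpa [add_comm] using hb y⟩,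
          by simp [hb x, add_comm]⟩
      · refine Or.inr ⟨b - a, ⟨g * f, G.mul_mem hgG hfG, fun y => ?_⟩, ?_⟩
        · have : (g * f) y = g (f y) := rfl
          rw [this, hf y, hb]
          simp only [neg_smul, one_smul]
          abel
        · rw [hb x]
          simp only [neg_smul, one_smul]
          abel
    · rintro (⟨v, ⟨g, hgG, hg⟩, rfl⟩ | ⟨v, ⟨g, hgG, hg⟩, rfl⟩)
      · exact ⟨g, hgG, by rw [hg x]⟩
      · refine ⟨g * f, G.mul_mem hgG hfG, ?_⟩
        have : (g * f) x = g (f x) := rfl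
        rw [this, hf x, hg]
  rw [horb, closure_union]
  have h1 : closure ((x + ·) '' T) = (x + ·) '' closure T :=
    ((Homeomorph.addLeft x).image_closure T).symm
  have h2 : closure ((-x + a + ·) '' T) = (-x + a + ·) '' closure T :=
    ((Homeomorph.addLeft (-x + a)).image_closure T).symm
  rw [h1, h2]
  congr 1 <;> ext z <;> simp only [Set.mem_image, Set.mem_setOf_eq] <;>
    constructor
  · rintro ⟨v, hv, rfl⟩
    exact ⟨v, hv, rfl⟩
  · rintro ⟨v, hv, rfl⟩
    exact ⟨v, hv, rfl⟩
  · rintro ⟨v, hv, rfl⟩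
    exact ⟨v, hv, rfl⟩
  · rintro ⟨v, hv, rfl⟩
    exact ⟨v, hv, rfl⟩
end

section
/- Let G be a non-abelian group of affine symmetries of ℝⁿ (maps x ↦ εx + a, ε ∈ {±1}). Then every orbit of G is minimal: for every x ∈ ℝⁿ and every y in the closure of G(x), the closure of G(y) equals the closure of G(x). -/
/-!
Every element of `G` is an isometry, and for any group of isometries the orbit closures
partition the space: if `y` is `ε`-close to `g x`, then `x` is `ε`-close to `g⁻¹ y`, so
`y ∈ closure (G x)` forces `x ∈ closure (G y)`, while continuity of each `g` gives
`closure (G y) ⊆ closure (G x)`.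
-/

open Equiv

section SubgroupOrbit

variable {α : Type*} (G : Subgroup (Perm α))

theorem closure_orbit_subset_of_mem_closure [TopologicalSpace α]
    (hcont : ∀ g ∈ G, Continuous g) {x y : α} (hy : y ∈ closure {z | ∃ g ∈ G, g x = z}) :
    closure {z | ∃ g ∈ G, g y = z} ⊆ closure {z | ∃ g ∈ G, g x = z} := by
  refine closure_minimal ?_ isClosed_closure
  rintro _ ⟨g, hg, rfl⟩
  have hmaps : Set.MapsTo g {z | ∃ h ∈ G, h x = z} {z | ∃ h ∈ G, h x = z} := by
    rintro _ ⟨h, hh, rfl⟩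
    exact ⟨g * h, mul_mem hg hh, rfl⟩
  exact hmaps.closure (hcont g hg) hy

theorem mem_closure_orbit_symm [PseudoEMetricSpace α] (hiso : ∀ g ∈ G, Isometry g) {x y : α}
    (hy : y ∈ closure {z | ∃ g ∈ G, g x = z}) : x ∈ closure {z | ∃ g ∈ G, g y = z} := by
  rw [EMetric.mem_closure_iff] at hy ⊢
  intro ε hε
  obtain ⟨_, ⟨g, hg, rfl⟩, hclose⟩ := hy ε hε
  refine ⟨g⁻¹ y, ⟨g⁻¹, inv_mem hg, rfl⟩, ?_⟩
  calc edist x (g⁻¹ y) = edist (g x) (g (g⁻¹ y)) := ((hiso g hg).edist_eq _ _).symm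
    _ = edist y (g x) := by rw [← Perm.mul_apply, mul_inv_cancel, Perm.one_apply, edist_comm]
    _ < ε := hclose

theorem closure_orbit_eq_of_mem_closure [PseudoEMetricSpace α] (hiso : ∀ g ∈ G, Isometry g)
    {x y : α} (hy : y ∈ closure {z | ∃ g ∈ G, g x = z}) :
    closure {z | ∃ g ∈ G, g y = z} = closure {z | ∃ g ∈ G, g x = z} := by
  have hcont : ∀ g ∈ G, Continuous g := fun g hg => (hiso g hg).continuous
  exact (closure_orbit_subset_of_mem_closure G hcont hy).antisymm
    (closure_orbit_subset_of_mem_closure G hcont (mem_closure_orbit_symm G hiso hy))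

end SubgroupOrbit

theorem isometry_smul_add {E : Type*} [SeminormedAddCommGroup E] [NormedSpace ℝ E] {ε : ℝ}
    (hε : ‖ε‖ = 1) (a : E) : Isometry fun x : E => ε • x + a :=
  Isometry.of_dist_eq fun u v => by
    rw [dist_add_right, dist_eq_norm, dist_eq_norm, ← smul_sub, norm_smul, hε, one_mul]

theorem stmt_15_general {n : ℕ} (G : Subgroup (Equiv.Perm (Fin n → ℝ)))
    (hG : ∀ f ∈ G, ∃ ε : ℝ, (ε = 1 ∨ ε = -1) ∧ ∃ a : Fin n → ℝ, ∀ x, f x = ε • x + a) :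
    ∀ x : Fin n → ℝ, ∀ y ∈ closure {z | ∃ g ∈ G, g x = z},
      closure {z | ∃ g ∈ G, g y = z} = closure {z | ∃ g ∈ G, g x = z} := by
  have hiso : ∀ f ∈ G, Isometry f := by
    intro f hf
    obtain ⟨ε, hε, a, hfa⟩ := hG f hf
    have hnorm : ‖ε‖ = 1 := by rcases hε with rfl | rfl <;> norm_num
    rw [show ⇑f = fun x => ε • x + a from funext hfa]
    exact isometry_smul_add hnorm a
  exact fun x y hy => closure_orbit_eq_of_mem_closure G hiso hy

theorem stmt_15 {n : ℕ} (G : Subgroup (Equiv.Perm (Fin n → ℝ)))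
    (hG : ∀ f ∈ G, ∃ ε : ℝ, (ε = 1 ∨ ε = -1) ∧ ∃ a : Fin n → ℝ, ∀ x, f x = ε • x + a)
    (hna : ∃ f ∈ G, ∃ g ∈ G, f * g ≠ g * f) :
    ∀ x : Fin n → ℝ, ∀ y ∈ closure {z | ∃ g ∈ G, g x = z},
      closure {z | ∃ g ∈ G, g y = z} = closure {z | ∃ g ∈ G, g x = z} :=
  stmt_15_general G hG
end

section
/- Let n ≥ 1, a ∈ ℝⁿ \ {0}, and x ∈ ℝⁿ \ ℝa. Let G be the group generated by f(x) = x + a, g(x) = −x + a, and h(x) = x + √2·a. Then the closure of G(0) equals the line ℝa (which is connected), while the closure of G(x) equals (x + ℝa) ∪ (−x + ℝa), which is not connected; in particular, the closures of G(0) and G(x) are not homeomorphic. -/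
/-!
Every element of `G` is `z ↦ ±z + c` with `c` in the additive group `T` generated by `a` and
`√2 • a`, and `G` contains all translations by `T` as well as the reflection `g`; hence
`G(x) = (x + T) ∪ (-x + T)`. Since `√2` is irrational, `ℤ + √2 ℤ` is dense in `ℝ`, so `T` is dense
in the line `ℝa`. Thus `G(0)` has closure `ℝa`, while `G(x)` has closure the union of the parallel
lines `x + ℝa` and `-x + ℝa`, which are disjoint because `x ∉ ℝa`: two disjoint nonempty closed
sets, so not connected.
-/

open Set
open scoped Pointwise

lemma Submodule.disjoint_vadd_neg_vadd {K E : Type*} [DivisionRing K] [CharZero K] [AddCommGroup E]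
    [Module K E] (L : Submodule K E) {x : E} (hx : x ∉ L) :
    Disjoint (x +ᵥ (L : Set E)) (-x +ᵥ (L : Set E)) := by
  rw [Set.disjoint_left]
  rintro _ ⟨u, hu, rfl⟩ ⟨v, hv, huv⟩
  simp only [vadd_eq_add] at huv
  have h2x : (2 : K) • x ∈ L := by
    convert L.sub_mem hv hu using 1
    rw [two_smul, eq_sub_iff_add_eq, add_assoc, ← huv]
    abel
  exact hx ((L.smul_mem_iff two_ne_zero).1 h2x)

lemma not_isPreconnected_union_of_disjoint {X : Type*} [TopologicalSpace X] {s t : Set X}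
    (hs : IsClosed s) (ht : IsClosed t) (hs' : s.Nonempty) (ht' : t.Nonempty)
    (hst : Disjoint s t) : ¬ IsPreconnected (s ∪ t) := by
  intro h
  rcases isPreconnected_iff_subset_of_disjoint_closed.1 h s t hs ht subset_rfl
    (by rw [hst.inter_eq, inter_empty]) with hsub | hsub
  · obtain ⟨y, hy⟩ := ht'
    exact hst.notMem_of_mem_right hy (hsub (Or.inr hy))
  · obtain ⟨y, hy⟩ := hs'
    exact hst.notMem_of_mem_left hy (hsub (Or.inl hy))

lemma IsConnected.isEmpty_homeomorph {X Y : Type*} [TopologicalSpace X] [TopologicalSpace Y]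
    {s : Set X} {t : Set Y} (hs : IsConnected s) (ht : ¬ IsConnected t) :
    IsEmpty (s ≃ₜ t) := by
  refine ⟨fun e => ht ?_⟩
  have := isConnected_iff_connectedSpace.1 hs
  exact isConnected_iff_connectedSpace.2 (e.surjective.connectedSpace e.continuous)

section Line

variable {E : Type*} [AddCommGroup E] [Module ℝ E] [TopologicalSpace E] [IsTopologicalAddGroup E]
  [ContinuousSMul ℝ E]

lemma closure_addSubgroupClosure_pair_smul [T2Space E] {s t : ℝ} (hst : Irrational (s / t))
    (a : E) : closure (AddSubgroup.closure {s • a, t • a} : Set E) = (ℝ ∙ a : Set E) := by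
  let φ : ℝ →+ E := (LinearMap.toSpanSingleton ℝ E a).toAddMonoidHom
  have hmap : AddSubgroup.closure {s • a, t • a} = (AddSubgroup.closure {s, t}).map φ := by
    rw [AddMonoidHom.map_closure, image_pair]; rfl
  have hrange : (ℝ ∙ a : Set E) = range φ := by
    ext y; simp [Submodule.mem_span_singleton, φ]
  apply (closure_minimal _ (Submodule.closed_of_finiteDimensional _)).antisymm
  · rw [hrange, ← image_univ, ← (dense_addSubgroupClosure_pair_iff.2 hst).closure_eq, hmap,
      AddSubgroup.coe_map]
    exact image_closure_subset_closure_image (continuous_id.smul continuous_const)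
  · rw [hmap, AddSubgroup.coe_map, hrange]
    exact image_subset_range _ _

lemma Submodule.not_isConnected_vadd_union_neg_vadd [T2Space E] (L : Submodule ℝ E)
    [FiniteDimensional ℝ L] {x : E} (hx : x ∉ L) :
    ¬ IsConnected ((x +ᵥ (L : Set E)) ∪ (-x +ᵥ (L : Set E))) := by
  have hL := L.closed_of_finiteDimensional
  exact fun hc => not_isPreconnected_union_of_disjoint (hL.vadd x) (hL.vadd (-x))
    L.nonempty.vadd_set L.nonempty.vadd_set (L.disjoint_vadd_neg_vadd hx) hc.isPreconnected

end Line

section SignedTranslations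

variable {E : Type*} [AddCommGroup E]

def signedTranslations (T : AddSubgroup E) : Subgroup (Equiv.Perm E) where
  carrier := {φ | ∃ c ∈ T, (∀ z, φ z = z + c) ∨ (∀ z, φ z = -z + c)}
  one_mem' := ⟨0, T.zero_mem, Or.inl fun z => by simp⟩
  mul_mem' := by
    rintro φ ψ ⟨c, hc, hφ | hφ⟩ ⟨d, hd, hψ | hψ⟩
    · refine ⟨d + c, add_mem hd hc, .inl fun z => ?_⟩
      simp only [Equiv.Perm.mul_apply, hφ, hψ]; abel
    · refine ⟨d + c, add_mem hd hc, .inr fun z => ?_⟩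
      simp only [Equiv.Perm.mul_apply, hφ, hψ]; abel
    · refine ⟨c - d, sub_mem hc hd, .inr fun z => ?_⟩
      simp only [Equiv.Perm.mul_apply, hφ, hψ]; abel
    · refine ⟨c - d, sub_mem hc hd, .inl fun z => ?_⟩
      simp only [Equiv.Perm.mul_apply, hφ, hψ]; abel
  inv_mem' := by
    rintro φ ⟨c, hc, hφ | hφ⟩
    · exact ⟨-c, neg_mem hc, Or.inl fun z => by rw [Equiv.Perm.inv_eq_iff_eq, hφ]; abel⟩
    · exact ⟨c, hc, Or.inr fun z => by rw [Equiv.Perm.inv_eq_iff_eq, hφ]; abel⟩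

def translationSubgroup (G : Subgroup (Equiv.Perm E)) : AddSubgroup E where
  carrier := {c | Equiv.addRight c ∈ G}
  zero_mem' := by simp [G.one_mem]
  add_mem' := by
    intro c d hc hd
    simpa [Equiv.addRight_add] using G.mul_mem hd hc
  neg_mem' := by
    intro c hc
    simpa using G.inv_mem hc

lemma mem_translationSubgroup {G : Subgroup (Equiv.Perm E)} {c : E} :
    c ∈ translationSubgroup G ↔ Equiv.addRight c ∈ G :=
  Iff.rfl

lemma orbit_eq_of_le_signedTranslations {G : Subgroup (Equiv.Perm E)} {T : AddSubgroup E}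
    (hGT : G ≤ signedTranslations T) (hTG : T ≤ translationSubgroup G)
    {ρ : Equiv.Perm E} (hρG : ρ ∈ G) {c : E} (hc : c ∈ T) (hρ : ∀ z, ρ z = -z + c) (x : E) :
    {z | ∃ φ ∈ G, φ x = z} = (x +ᵥ (T : Set E)) ∪ (-x +ᵥ (T : Set E)) := by
  ext z
  simp only [mem_union, mem_vadd_set, SetLike.mem_coe, vadd_eq_add]
  constructor
  · rintro ⟨φ, hφG, rfl⟩
    obtain ⟨d, hd, hφ | hφ⟩ := hGT hφG
    exacts [Or.inl ⟨d, hd, (hφ x).symm⟩, Or.inr ⟨d, hd, (hφ x).symm⟩]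
  · rintro (⟨d, hd, rfl⟩ | ⟨d, hd, rfl⟩)
    · exact ⟨_, hTG hd, by simp⟩
    · refine ⟨Equiv.addRight (d - c) * ρ, G.mul_mem (hTG (sub_mem hd hc)) hρG, ?_⟩
      simp only [Equiv.Perm.mul_apply, hρ, Equiv.coe_addRight]; abel

lemma orbit_closure_eq {f g h : Equiv.Perm E} {a b : E} (hf : ∀ z, f z = z + a)
    (hg : ∀ z, g z = -z + a) (hh : ∀ z, h z = z + b) (x : E) :
    {z | ∃ φ ∈ Subgroup.closure {f, g, h}, φ x = z} =
      (x +ᵥ (AddSubgroup.closure {a, b} : Set E)) ∪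
        (-x +ᵥ (AddSubgroup.closure {a, b} : Set E)) := by
  set G := Subgroup.closure {f, g, h}
  set T := AddSubgroup.closure {a, b}
  have hfG : f ∈ G := Subgroup.subset_closure (by simp)
  have hgG : g ∈ G := Subgroup.subset_closure (by simp)
  have hhG : h ∈ G := Subgroup.subset_closure (by simp)
  have haT : a ∈ T := AddSubgroup.subset_closure (by simp)
  have hbT : b ∈ T := AddSubgroup.subset_closure (by simp)
  have hGT : G ≤ signedTranslations T := by
    rw [Subgroup.closure_le]
    rintro φ (rfl | rfl | rfl)
    exacts [⟨a, haT, Or.inl hf⟩, ⟨a, haT, Or.inr hg⟩, ⟨b, hbT, Or.inl hh⟩]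
  have hTG : T ≤ translationSubgroup G := by
    rw [AddSubgroup.closure_le]
    rintro c (hc | hc) <;> subst c
    · exact mem_translationSubgroup.2 ((Equiv.ext hf : f = Equiv.addRight a) ▸ hfG)
    · exact mem_translationSubgroup.2 ((Equiv.ext hh : h = Equiv.addRight b) ▸ hhG)
  exact orbit_eq_of_le_signedTranslations hGT hTG hgG haT hg x

end SignedTranslations

theorem stmt_17_general {n : ℕ} (a : Fin n → ℝ)
    (x : Fin n → ℝ) (hx : x ∉ {y : Fin n → ℝ | ∃ t : ℝ, y = t • a})
    (f g h : Equiv.Perm (Fin n → ℝ))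
    (hf : ∀ z, f z = z + a) (hg : ∀ z, g z = -z + a)
    (hh : ∀ z, h z = z + Real.sqrt 2 • a)
    (G : Subgroup (Equiv.Perm (Fin n → ℝ))) (hG : G = Subgroup.closure {f, g, h}) :
    closure {z | ∃ φ ∈ G, φ 0 = z} = {y : Fin n → ℝ | ∃ t : ℝ, y = t • a} ∧
    IsConnected (closure {z | ∃ φ ∈ G, φ 0 = z}) ∧
    closure {z | ∃ φ ∈ G, φ x = z} =
      {y | ∃ t : ℝ, y = x + t • a} ∪ {y | ∃ t : ℝ, y = -x + t • a} ∧
    ¬ IsConnected (closure {z | ∃ φ ∈ G, φ x = z}) ∧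
    IsEmpty ((closure {z | ∃ φ ∈ G, φ 0 = z}) ≃ₜ (closure {z | ∃ φ ∈ G, φ x = z})) := by
  subst hG
  set L := ℝ ∙ a
  have hT : closure (AddSubgroup.closure {a, √2 • a} : Set (Fin n → ℝ)) = L := by
    simpa using closure_addSubgroupClosure_pair_smul (s := 1) (t := √2)
      (by simpa using irrational_sqrt_two.inv) a
  have hclosure (w : Fin n → ℝ) : closure {z | ∃ φ ∈ Subgroup.closure {f, g, h}, φ w = z} =
      (w +ᵥ (L : Set _)) ∪ (-w +ᵥ (L : Set _)) := by
    rw [orbit_closure_eq hf hg hh, closure_union, closure_vadd, closure_vadd, hT]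
  have hline (w : Fin n → ℝ) : {y | ∃ t : ℝ, y = w + t • a} = w +ᵥ (L : Set _) := by
    ext y; simp [L, Submodule.mem_span_singleton, mem_vadd_set, eq_comm]
  have hL : {y : Fin n → ℝ | ∃ t : ℝ, y = t • a} = L := by simpa using hline 0
  have hconn : IsConnected (closure {z | ∃ φ ∈ Subgroup.closure {f, g, h}, φ 0 = z}) := by
    simpa [hclosure] using L.isPathConnected.isConnected
  have hdisconn : ¬ IsConnected (closure {z | ∃ φ ∈ Subgroup.closure {f, g, h}, φ x = z}) := by
    rw [hclosure]
    exact L.not_isConnected_vadd_union_neg_vadd (by rwa [hL] at hx)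
  exact ⟨by simpa [hclosure] using hL.symm, hconn, by rw [hclosure, hline, hline], hdisconn,
    hconn.isEmpty_homeomorph hdisconn⟩

theorem stmt_17 {n : ℕ} (hn : 1 ≤ n) (a : Fin n → ℝ) (ha : a ≠ 0)
    (x : Fin n → ℝ) (hx : x ∉ {y : Fin n → ℝ | ∃ t : ℝ, y = t • a})
    (f g h : Equiv.Perm (Fin n → ℝ))
    (hf : ∀ z, f z = z + a) (hg : ∀ z, g z = -z + a)
    (hh : ∀ z, h z = z + Real.sqrt 2 • a)
    (G : Subgroup (Equiv.Perm (Fin n → ℝ))) (hG : G = Subgroup.closure {f, g, h}) :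
    closure {z | ∃ φ ∈ G, φ 0 = z} = {y : Fin n → ℝ | ∃ t : ℝ, y = t • a} ∧
    IsConnected (closure {z | ∃ φ ∈ G, φ 0 = z}) ∧
    closure {z | ∃ φ ∈ G, φ x = z} =
      {y | ∃ t : ℝ, y = x + t • a} ∪ {y | ∃ t : ℝ, y = -x + t • a} ∧
    ¬ IsConnected (closure {z | ∃ φ ∈ G, φ x = z}) ∧
    IsEmpty ((closure {z | ∃ φ ∈ G, φ 0 = z}) ≃ₜ (closure {z | ∃ φ ∈ G, φ x = z})) :=
  stmt_17_general a x hx f g h hf hg hh G hG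
end
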